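/- arXiv:1604.04524 — 4 statements merged into one kernel-verified Lean document; each statement's English description precedes it below -/
import Mathlib

section
/- Let n ≥ 2 be an integer, let p₁,…,pₙ ≥ 1 be integers with pᵢ ≥ 2 for at least one index i, and let z be an n×n matrix of complex numbers of modulus one with z_{ij} = conj(z_{ji}) for all i,j and z_{ii} = 1 for all i. Let A be a unital C*-algebra containing unitaries u₁,…,uₙ satisfying uᵢ^{pᵢ} uⱼ^{pⱼ} = z_{ij} uⱼ^{pⱼ} uᵢ^{pᵢ} for all 1 ≤ i,j ≤ n, and suppose A has the universal property for these relations: for every unital C*-algebra B and unitaries w₁,…,wₙ in B satisfying wᵢ^{pᵢ} wⱼ^{pⱼ} = z_{ij} wⱼ^{pⱼ} wᵢ^{pᵢ} for all i,j, there exists a unital *-homomorphism φ : A → B with φ(uᵢ) = wᵢ for all i. Then A is not simple, i.e. A possesses a closed two-sided ideal different from {0} and from A. -/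
/-!
Choose scalars `λᵢⱼ = λⱼᵢ⁻¹` of modulus one with `λᵢⱼ ^ (pᵢ pⱼ) = zᵢⱼ`. The twisted shifts
`(Wᵢ f)(x) = (∏ⱼ cᵢⱼ ^ xⱼ) f(x - eᵢ)` on `ℓ²(ℤⁿ)`, with `cᵢⱼ = λᵢⱼ` above the diagonal and `1`
elsewhere, are unitaries with `Wᵢ Wⱼ = λᵢⱼ Wⱼ Wᵢ`, so they satisfy the defining relations and the
universal property yields `θ : A → B(ℓ²(ℤⁿ))` with `θ(uᵢ) = Wᵢ`. Since `pₖ pⱼ ≥ 2`, the scalar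
`λₖⱼ` can be chosen in two different ways, and the two resulting representations send the
commutator `uₖ uⱼ uₖ* uⱼ*` to two different scalars. Hence it is not a scalar in `A`, so the first
representation is not injective and its kernel, closed because `*`-homomorphisms of C*-algebras
are contractive, is a proper nonzero ideal.
-/

open scoped lp

section TwistedShift

variable {G : Type*} [AddCommGroup G]

lemma memℓp_comp_equiv_iff {α β E : Type*} [NormedAddCommGroup E] {p : ENNReal}
    (hp : 0 < p.toReal) (e : α ≃ β) {f : β → E} :
    Memℓp (f ∘ e) p ↔ Memℓp f p := by
  simp only [memℓp_gen_iff hp, Function.comp_def]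
  exact e.summable_iff (f := fun b => ‖f b‖ ^ p.toReal)

lemma memℓp_twistedShift (φ : G → Circle) (v : G) (f : ℓ²(G, ℂ)) :
    Memℓp (fun x => φ x • f (x - v)) 2 := by
  rw [← memℓp_norm_iff]
  simp only [Circle.norm_smul]
  exact memℓp_norm_iff.2 <| (memℓp_comp_equiv_iff (by norm_num) (Equiv.subRight v)).2 (lp.memℓp f)

def twistedShiftₗᵢ (φ : G → Circle) (v : G) : ℓ²(G, ℂ) →ₗᵢ[ℂ] ℓ²(G, ℂ) where
  toFun f := ⟨fun x => φ x • f (x - v), memℓp_twistedShift φ v f⟩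
  map_add' f g := lp.ext <| funext fun x => smul_add (φ x) (f (x - v)) (g (x - v))
  map_smul' c f := lp.ext <| funext fun x => smul_comm (φ x) c (f (x - v))
  norm_map' f := by
    have h2 : (0 : ℝ) < (2 : ENNReal).toReal := by norm_num
    simp only [LinearMap.coe_mk, AddHom.coe_mk]
    rw [lp.norm_eq_tsum_rpow h2, lp.norm_eq_tsum_rpow h2]
    congr 1
    simpa [Circle.norm_smul] using
      (Equiv.subRight v).tsum_eq (fun x => ‖f x‖ ^ (2 : ENNReal).toReal)

@[simp]
lemma twistedShiftₗᵢ_apply (φ : G → Circle) (v : G) (f : ℓ²(G, ℂ)) (x : G) :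
    twistedShiftₗᵢ φ v f x = φ x • f (x - v) := rfl

lemma twistedShiftₗᵢ_twistedShiftₗᵢ (φ ψ : G → Circle) (v w : G) (f : ℓ²(G, ℂ)) :
    twistedShiftₗᵢ φ v (twistedShiftₗᵢ ψ w f) =
      twistedShiftₗᵢ (fun x => φ x * ψ (x - v)) (v + w) f :=
  lp.ext <| funext fun x => by simp [mul_smul, sub_sub]

lemma surjective_twistedShiftₗᵢ (φ : G → Circle) (v : G) :
    Function.Surjective (twistedShiftₗᵢ φ v) := fun f =>
  ⟨twistedShiftₗᵢ (fun x => (φ (x + v))⁻¹) (-v) f, by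
    rw [twistedShiftₗᵢ_twistedShiftₗᵢ]
    exact lp.ext <| funext fun x => by simp⟩

noncomputable def twistedShift (φ : G → Circle) (v : G) : ℓ²(G, ℂ) ≃ₗᵢ[ℂ] ℓ²(G, ℂ) :=
  .ofSurjective _ (surjective_twistedShiftₗᵢ φ v)

lemma twistedShift_mem_unitary (φ : G → Circle) (v : G) :
    (twistedShift φ v : ℓ²(G, ℂ) →L[ℂ] ℓ²(G, ℂ)) ∈ unitary (ℓ²(G, ℂ) →L[ℂ] ℓ²(G, ℂ)) :=
  (Unitary.linearIsometryEquiv.symm (twistedShift φ v)).2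

lemma twistedShift_mul_twistedShift (χ ψ : AddChar G Circle) (v w : G) :
    (twistedShift χ v : ℓ²(G, ℂ) →L[ℂ] ℓ²(G, ℂ)) * twistedShift ψ w =
      (χ w / ψ v) • ((twistedShift ψ w : ℓ²(G, ℂ) →L[ℂ] ℓ²(G, ℂ)) * twistedShift χ v) := by
  ext f x
  simp only [twistedShift, mul_apply_eq_comp, ContinuousLinearEquiv.coe_coe,
    LinearIsometryEquiv.coe_toContinuousLinearEquiv, LinearIsometryEquiv.coe_ofSurjective,
    twistedShiftₗᵢ_apply, AddChar.map_sub_eq_div, sub_right_comm x v w, Circle.smul_def,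
    Circle.coe_div, smul_eq_mul, smul_apply, lp.coeFn_smul, Pi.smul_apply]
  field_simp

end TwistedShift

section TwistedCommutation

variable {R B : Type*} [CommMonoid R] [Monoid B] [MulAction R B] [IsScalarTower R B B]
  [SMulCommClass R B B] {a b : B} {μ : R}

lemma mul_pow_eq_smul_of_mul_eq_smul (h : a * b = μ • (b * a)) (t : ℕ) :
    a * b ^ t = μ ^ t • (b ^ t * a) := by
  induction t with
  | zero => simp
  | succ t ih =>
    rw [pow_succ, ← mul_assoc, ih, smul_mul_assoc, mul_assoc, h, mul_smul_comm, smul_smul,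
      ← mul_assoc, ← pow_succ, pow_succ]

lemma pow_mul_pow_eq_smul_of_mul_eq_smul (h : a * b = μ • (b * a)) (s t : ℕ) :
    a ^ s * b ^ t = μ ^ (s * t) • (b ^ t * a ^ s) := by
  induction s with
  | zero => simp
  | succ s ih =>
    rw [pow_succ', mul_assoc, ih, mul_smul_comm, ← mul_assoc,
      mul_pow_eq_smul_of_mul_eq_smul h, smul_mul_assoc, smul_smul, mul_assoc, ← pow_succ',
      ← pow_add, add_mul, one_mul, add_comm]

end TwistedCommutation

lemma mul_mul_star_mul_star_eq_smul {R B : Type*} [Monoid B] [StarMul B] [SMul R B]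
    [IsScalarTower R B B] {a b : B} {μ : R} (ha : a ∈ unitary B) (hb : b ∈ unitary B)
    (h : a * b = μ • (b * a)) :
    a * b * star a * star b = μ • 1 := by
  rw [h, smul_mul_assoc, smul_mul_assoc, mul_assoc b, Unitary.mul_star_self_of_mem ha, mul_one,
    Unitary.mul_star_self_of_mem hb]

namespace Circle

noncomputable def root (m : ℤ) (q : ℕ) (w : Circle) : Circle :=
  exp ((Complex.arg w + 2 * Real.pi * m) / q)

lemma root_pow (m : ℤ) {q : ℕ} (hq : q ≠ 0) (w : Circle) : root m q w ^ q = w := by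
  rw [root, ← exp_natCast_mul, mul_div_cancel₀ _ (by exact_mod_cast hq), exp_add,
    exp_arg, exp_two_pi_mul_int, mul_one]

lemma root_one_ne_root_zero {q : ℕ} (hq : 2 ≤ q) (w : Circle) : root 1 q w ≠ root 0 q w := by
  have hζ : exp (2 * Real.pi / q) ≠ 1 := by
    rw [Ne, ← coe_eq_one, coe_exp]
    convert (Complex.isPrimitiveRoot_exp q (by omega)).ne_one (by omega) using 2
    push_cast; congr 1; ring
  intro h
  apply hζ
  rw [root, root, add_div, add_div, exp_add, exp_add] at h
  simpa using h

end Circle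

instance lp.nontrivial {α E : Type*} [Nonempty α] [NormedAddCommGroup E] [Nontrivial E]
    {p : ENNReal} : Nontrivial (lp (fun _ : α => E) p) := by
  classical
  obtain ⟨a⟩ := ‹Nonempty α›
  obtain ⟨x, hx⟩ := exists_ne (0 : E)
  exact ⟨lp.single p a x, 0, fun h => hx (by simpa using congrArg (fun f : lp _ p => f a) h)⟩

section Rotation

universe u

variable {ι : Type*} [Fintype ι] [DecidableEq ι]

noncomputable def zpowChar (c : ι → Circle) : AddChar (ULift.{u} (ι → ℤ)) Circle where
  toFun x := ∏ j, c j ^ x.down j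
  map_zero_eq_one' := by simp
  map_add_eq_mul' x y := by simp [zpow_add, Finset.prod_mul_distrib]

lemma zpowChar_single (c : ι → Circle) (j : ι) :
    zpowChar.{u} c (ULift.up (Pi.single j 1)) = c j := by
  simp [zpowChar, Pi.single_apply]

noncomputable def rotationOperator (c : ι → ι → Circle) (i : ι) :
    ℓ²(ULift.{u} (ι → ℤ), ℂ) →L[ℂ] ℓ²(ULift.{u} (ι → ℤ), ℂ) :=
  twistedShift (zpowChar (c i)) (ULift.up (Pi.single i 1))

lemma rotationOperator_mem_unitary (c : ι → ι → Circle) (i : ι) :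
    rotationOperator.{u} c i ∈
      unitary (ℓ²(ULift.{u} (ι → ℤ), ℂ) →L[ℂ] ℓ²(ULift.{u} (ι → ℤ), ℂ)) :=
  twistedShift_mem_unitary _ _

lemma rotationOperator_mul_rotationOperator (c : ι → ι → Circle) (i j : ι) :
    rotationOperator.{u} c i * rotationOperator c j =
      (c i j / c j i) • (rotationOperator c j * rotationOperator c i) := by
  rw [rotationOperator, rotationOperator, twistedShift_mul_twistedShift, zpowChar_single,
    zpowChar_single]

end Rotation

section UpperRoots

variable {ι : Type*} [LinearOrder ι]

noncomputable def upperRoots (m : ℤ) (p : ι → ℕ) (z : ι → ι → Circle) (i j : ι) : Circle :=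
  if i < j then Circle.root m (p i * p j) (z i j) else 1

lemma upperRoots_div_pow (m : ℤ) {p : ι → ℕ} (hp : ∀ i, p i ≠ 0) {z : ι → ι → Circle}
    (hz : ∀ i j, z j i = (z i j)⁻¹) (hzdiag : ∀ i, z i i = 1) (i j : ι) :
    (upperRoots m p z i j / upperRoots m p z j i) ^ (p i * p j) = z i j := by
  have hpp : ∀ i j, p i * p j ≠ 0 := fun i j => mul_ne_zero (hp i) (hp j)
  rcases lt_trichotomy i j with hij | rfl | hij
  · simp [upperRoots, hij, hij.not_gt, Circle.root_pow _ (hpp i j)]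
  · simp [upperRoots, hzdiag]
  · simp [upperRoots, hij, hij.not_gt, mul_comm (p i), Circle.root_pow _ (hpp j i), hz j i]

lemma upperRoots_one_div_ne {p : ι → ℕ} (z : ι → ι → Circle) {i j : ι} (hij : i ≠ j)
    (hp : 2 ≤ p i * p j) :
    upperRoots 1 p z i j / upperRoots 1 p z j i ≠
      upperRoots 0 p z i j / upperRoots 0 p z j i := by
  rcases hij.lt_or_gt with hij | hij
  · simpa [upperRoots, hij, hij.not_gt] using Circle.root_one_ne_root_zero hp (z i j)
  · simpa [upperRoots, hij, hij.not_gt, mul_comm (p i)] using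
      Circle.root_one_ne_root_zero hp (z j i)

end UpperRoots

open scoped CStarAlgebra in
lemma StarAlgHom.exists_isClosed_twoSidedIdeal_ne_bot_ne_top_of_not_injective
    {A B : Type*} [CStarAlgebra A] [CStarAlgebra B] [Nontrivial B] (θ : A →⋆ₐ[ℂ] B)
    (hθ : ¬ Function.Injective θ) :
    ∃ I : TwoSidedIdeal A, IsClosed (I : Set A) ∧ I ≠ ⊥ ∧ I ≠ ⊤ := by
  refine ⟨TwoSidedIdeal.ker θ, ?_, by rwa [Ne, TwoSidedIdeal.ker_eq_bot], fun h => ?_⟩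
  · have hker : (TwoSidedIdeal.ker θ : Set A) = θ ⁻¹' {0} :=
      Set.ext fun _ => TwoSidedIdeal.mem_ker θ
    rw [hker]
    exact isClosed_singleton.preimage (map_continuous θ)
  · have h1 : (1 : A) ∈ TwoSidedIdeal.ker θ := h ▸ TwoSidedIdeal.mem_top A
    simp [TwoSidedIdeal.mem_ker] at h1

theorem stmt_0_general (n : ℕ) (hn : 2 ≤ n) (p : Fin n → ℕ) (hp : ∀ i, 1 ≤ p i)
    (hp2 : ∃ i, 2 ≤ p i)
    (z : Fin n → Fin n → ℂ) (hzmod : ∀ i j, ‖z i j‖ = 1)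
    (hzconj : ∀ i j, z i j = starRingEnd ℂ (z j i)) (hzdiag : ∀ i, z i i = 1)
    (A : Type*) [NormedRing A] [StarRing A] [CStarRing A] [CompleteSpace A]
    [NormedAlgebra ℂ A] [StarModule ℂ A]
    (u : Fin n → A)
    (huniv : ∀ (B : Type*) [NormedRing B] [StarRing B] [CStarRing B] [CompleteSpace B]
      [NormedAlgebra ℂ B] [StarModule ℂ B] (w : Fin n → B),
      (∀ i, w i ∈ unitary B) →
      (∀ i j, (w i) ^ (p i) * (w j) ^ (p j)
        = z i j • ((w j) ^ (p j) * (w i) ^ (p i))) →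
      ∃ φ : A →⋆ₐ[ℂ] B, ∀ i, φ (u i) = w i) :
    ∃ I : TwoSidedIdeal A, IsClosed (I : Set A) ∧ I ≠ ⊥ ∧ I ≠ ⊤ := by
  let _ : CStarAlgebra A := {}
  obtain ⟨k, hk⟩ := hp2
  have : Nontrivial (Fin n) := Fin.nontrivial_iff_two_le.2 hn
  obtain ⟨j, hjk⟩ := exists_ne k
  let zc (i l : Fin n) : Circle := ⟨z i l, mem_sphere_zero_iff_norm.2 (hzmod i l)⟩
  have hzc : ∀ i l, zc l i = (zc i l)⁻¹ := fun i l => Circle.ext <| by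
    rw [Circle.coe_inv_eq_conj]
    simp [zc, hzconj i l]
  let μ (m : ℤ) : ℂ := upperRoots m p zc k j / upperRoots m p zc j k
  have hrep : ∀ m : ℤ, ∃ θ : A →⋆ₐ[ℂ]
      (ℓ²(ULift.{u_2} (Fin n → ℤ), ℂ) →L[ℂ] ℓ²(ULift.{u_2} (Fin n → ℤ), ℂ)),
      θ (u k * u j * star (u k) * star (u j)) = μ m • 1 := by
    intro m
    have hcomm := rotationOperator_mul_rotationOperator (upperRoots m p zc)
    obtain ⟨θ, hθ⟩ := huniv _ (rotationOperator (upperRoots m p zc))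
      (rotationOperator_mem_unitary _) fun i l => by
        rw [pow_mul_pow_eq_smul_of_mul_eq_smul (hcomm i l), upperRoots_div_pow m
          (fun i => Nat.one_le_iff_ne_zero.1 (hp i)) hzc (fun i => Circle.ext (hzdiag i))]
        rfl
    refine ⟨θ, ?_⟩
    simp only [map_mul, map_star, hθ]
    exact mul_mul_star_mul_star_eq_smul (rotationOperator_mem_unitary _ _)
      (rotationOperator_mem_unitary _ _) (hcomm k j)
  obtain ⟨θ₀, hθ₀⟩ := hrep 0
  obtain ⟨θ₁, hθ₁⟩ := hrep 1
  refine θ₀.exists_isClosed_twoSidedIdeal_ne_bot_ne_top_of_not_injective fun hinj => ?_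
  have ha : u k * u j * star (u k) * star (u j) = μ 0 • 1 := hinj <| by
    rw [hθ₀, map_smul, map_one]
  rw [ha, map_smul, map_one] at hθ₁
  exact upperRoots_one_div_ne zc hjk.symm (hk.trans (Nat.le_mul_of_pos_right _ (hp j))) <|
    Circle.coe_injective (smul_left_injective ℂ one_ne_zero hθ₁).symm

/-- The universal C*-algebra generated by unitaries `u₁, …, uₙ` subject to
`uᵢ^{pᵢ} uⱼ^{pⱼ} = z_{ij} uⱼ^{pⱼ} uᵢ^{pᵢ}` is not simple when some `pᵢ ≥ 2`. -/
theorem stmt_0 (n : ℕ) (hn : 2 ≤ n) (p : Fin n → ℕ) (hp : ∀ i, 1 ≤ p i)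
    (hp2 : ∃ i, 2 ≤ p i)
    (z : Fin n → Fin n → ℂ) (hzmod : ∀ i j, ‖z i j‖ = 1)
    (hzconj : ∀ i j, z i j = starRingEnd ℂ (z j i)) (hzdiag : ∀ i, z i i = 1)
    (A : Type*) [NormedRing A] [StarRing A] [CStarRing A] [CompleteSpace A]
    [NormedAlgebra ℂ A] [StarModule ℂ A]
    (u : Fin n → A) (hu : ∀ i, u i ∈ unitary A)
    (hrel : ∀ i j, (u i) ^ (p i) * (u j) ^ (p j)
      = z i j • ((u j) ^ (p j) * (u i) ^ (p i)))
    (huniv : ∀ (B : Type*) [NormedRing B] [StarRing B] [CStarRing B] [CompleteSpace B]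
      [NormedAlgebra ℂ B] [StarModule ℂ B] (w : Fin n → B),
      (∀ i, w i ∈ unitary B) →
      (∀ i j, (w i) ^ (p i) * (w j) ^ (p j)
        = z i j • ((w j) ^ (p j) * (w i) ^ (p i))) →
      ∃ φ : A →⋆ₐ[ℂ] B, ∀ i, φ (u i) = w i) :
    ∃ I : TwoSidedIdeal A, IsClosed (I : Set A) ∧ I ≠ ⊥ ∧ I ≠ ⊤ :=
  stmt_0_general n hn p hp hp2 z hzmod hzconj hzdiag A u huniv
end

section
/- Let A be a unital C*-algebra containing unitaries u₁ and u₂ satisfying u₁² u₂ = -u₂ u₁², and suppose A has the universal property for this relation: for every unital C*-algebra B and unitaries w₁, w₂ in B satisfying w₁² w₂ = -w₂ w₁², there exists a unital *-homomorphism φ : A → B with φ(u₁) = w₁ and φ(u₂) = w₂. Then A is not simple, i.e. A possesses a closed two-sided ideal different from {0} and from A. -/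
/-!
Twisting `u₁` by a scalar of modulus one preserves the relations, so `2 × 2` matrices carry
the representations `u₁ ↦ c • diag(1, i)`, `u₂ ↦ [[0, 1], [1, 0]]` for every `|c| = 1`. The
element `u₁ ^ 4` goes to `1` for `c = 1` but to `-1` for `c = e^{iπ/4}`, so the representation
with `c = 1` is not injective. Its kernel is then a nonzero ideal, proper because the
representation is unital, and closed because *-homomorphisms of C*-algebras are continuous.
-/

open scoped Matrix Matrix.Norms.L2Operator CStarAlgebra
open Complex

namespace TwoSidedIdeal

theorem isClosed_ker {R S F : Type*} [NonUnitalNonAssocRing R] [NonUnitalNonAssocSemiring S]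
    [FunLike F R S] [NonUnitalRingHomClass F R S] [TopologicalSpace R] [TopologicalSpace S]
    [T1Space S] (f : F) (hf : Continuous f) : IsClosed (ker f : Set R) := by
  have : (ker f : Set R) = f ⁻¹' {0} := by ext; simp [mem_ker]
  exact this ▸ isClosed_singleton.preimage hf

theorem ker_ne_top {R S F : Type*} [NonAssocRing R] [NonAssocSemiring S] [Nontrivial S]
    [FunLike F R S] [RingHomClass F R S] (f : F) : ker f ≠ ⊤ := fun h => by
  have : (1 : R) ∈ ker f := h ▸ mem_top R
  simp [mem_ker] at this

end TwoSidedIdeal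

theorem StarAlgHom.exists_isClosed_twoSidedIdeal_ne_bot_ne_top {A B : Type*} [CStarAlgebra A]
    [CStarAlgebra B] [Nontrivial B] (φ : A →⋆ₐ[ℂ] B) (hφ : ¬ Function.Injective φ) :
    ∃ I : TwoSidedIdeal A, IsClosed (I : Set A) ∧ I ≠ ⊥ ∧ I ≠ ⊤ :=
  ⟨TwoSidedIdeal.ker φ, TwoSidedIdeal.isClosed_ker φ (map_continuous φ),
    (TwoSidedIdeal.ker_eq_bot φ).not.mpr hφ, TwoSidedIdeal.ker_ne_top φ⟩

def Matrix.reindexStarAlgEquiv (R α : Type*) {m n : Type*} [CommSemiring R] [Fintype m]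
    [Fintype n] [DecidableEq m] [DecidableEq n] [Semiring α] [StarRing α] [Algebra R α]
    (e : m ≃ n) : Matrix m m α ≃⋆ₐ[R] Matrix n n α where
  __ := Matrix.reindexAlgEquiv R α e
  map_smul' := map_smul (Matrix.reindexAlgEquiv R α e)
  map_star' M := (Matrix.conjTranspose_reindex e e M).symm

structure IsSqAnticommUnitaryPair {B : Type*} [Ring B] [StarMul B] (w₁ w₂ : B) : Prop where
  mem_unitary_left : w₁ ∈ unitary B
  mem_unitary_right : w₂ ∈ unitary B
  sq_mul_eq_neg_mul_sq : w₁ ^ 2 * w₂ = -(w₂ * w₁ ^ 2)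

namespace IsSqAnticommUnitaryPair

variable {B : Type*} [Ring B] [StarMul B] {w₁ w₂ : B}

theorem map {C F : Type*} [Ring C] [StarMul C] [FunLike F B C] [RingHomClass F B C]
    [StarHomClass F B C] (h : IsSqAnticommUnitaryPair w₁ w₂) (f : F) :
    IsSqAnticommUnitaryPair (f w₁) (f w₂) where
  mem_unitary_left := Unitary.map_mem f h.mem_unitary_left
  mem_unitary_right := Unitary.map_mem f h.mem_unitary_right
  sq_mul_eq_neg_mul_sq := by
    simpa only [map_mul, map_pow, map_neg] using congrArg f h.sq_mul_eq_neg_mul_sq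

theorem smul_left {R : Type*} [CommRing R] [StarMul R] [Algebra R B] [StarModule R B]
    (h : IsSqAnticommUnitaryPair w₁ w₂) {c : R} (hc : c ∈ unitary R) :
    IsSqAnticommUnitaryPair (c • w₁) w₂ where
  mem_unitary_left := Unitary.smul_mem_of_mem hc h.mem_unitary_left
  mem_unitary_right := h.mem_unitary_right
  sq_mul_eq_neg_mul_sq := by
    rw [smul_pow, smul_mul_assoc, h.sq_mul_eq_neg_mul_sq, mul_smul_comm, smul_neg]

end IsSqAnticommUnitaryPair

theorem isSqAnticommUnitaryPair_diag_swap :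
    IsSqAnticommUnitaryPair (!![1, 0; 0, I] : Matrix (Fin 2) (Fin 2) ℂ) !![0, 1; 1, 0] where
  mem_unitary_left := by
    rw [Unitary.mem_iff, Matrix.star_eq_conjTranspose, Matrix.eta_fin_two !![(1 : ℂ), 0; 0, I]ᴴ]
    simp [Matrix.one_fin_two]
  mem_unitary_right := by
    rw [Unitary.mem_iff, Matrix.star_eq_conjTranspose, Matrix.eta_fin_two !![(0 : ℂ), 1; 1, 0]ᴴ]
    simp [Matrix.one_fin_two]
  sq_mul_eq_neg_mul_sq := by simp [sq]

theorem diag_one_I_pow_four : (!![1, 0; 0, I] : Matrix (Fin 2) (Fin 2) ℂ) ^ 4 = 1 := by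
  simp [pow_succ, Matrix.one_fin_two]

theorem exp_pi_div_four_mul_I_mem_unitary : exp (↑(Real.pi / 4) * I) ∈ unitary ℂ := by
  rw [Unitary.mem_iff_star_mul_self, star_def, ← exp_conj, ← exp_add, map_mul, conj_ofReal,
    conj_I, mul_neg, neg_add_cancel, exp_zero]

theorem exp_pi_div_four_mul_I_pow_four : exp (↑(Real.pi / 4) * I) ^ 4 = -1 := by
  rw [← exp_nat_mul, ← exp_pi_mul_I]
  push_cast; ring_nf

theorem stmt_7_general (A : Type*) [NormedRing A] [StarRing A] [CStarRing A] [CompleteSpace A]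
    [NormedAlgebra ℂ A] [StarModule ℂ A]
    (u₁ u₂ : A)
    (huniv : ∀ (B : Type*) [NormedRing B] [StarRing B] [CStarRing B] [CompleteSpace B]
      [NormedAlgebra ℂ B] [StarModule ℂ B] (w₁ w₂ : B),
      w₁ ∈ unitary B → w₂ ∈ unitary B → w₁ ^ 2 * w₂ = -(w₂ * w₁ ^ 2) →
      ∃ φ : A →⋆ₐ[ℂ] B, φ u₁ = w₁ ∧ φ u₂ = w₂) :
    ∃ I : TwoSidedIdeal A, IsClosed (I : Set A) ∧ I ≠ ⊥ ∧ I ≠ ⊤ := by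
  let _ : CStarAlgebra A := {}
  -- `huniv` only reaches algebras in one fixed universe, hence the `ULift` index type.
  let ρ := Matrix.reindexStarAlgEquiv ℂ ℂ (Equiv.ulift (α := Fin 2)).symm
  have hpair := isSqAnticommUnitaryPair_diag_swap.map ρ
  have hpow : ρ !![1, 0; 0, I] ^ 4 = 1 := by rw [← map_pow, diag_one_I_pow_four, map_one]
  obtain ⟨φ, hφ, -⟩ := huniv _ _ _ hpair.mem_unitary_left hpair.mem_unitary_right
    hpair.sq_mul_eq_neg_mul_sq
  have htwist := hpair.smul_left exp_pi_div_four_mul_I_mem_unitary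
  obtain ⟨ψ, hψ, -⟩ := huniv _ _ _ htwist.mem_unitary_left htwist.mem_unitary_right
    htwist.sq_mul_eq_neg_mul_sq
  refine φ.exists_isClosed_twoSidedIdeal_ne_bot_ne_top fun hφinj => ?_
  have hu₁_pow : u₁ ^ 4 = 1 := hφinj (by rw [map_pow, hφ, hpow, map_one])
  have h := congrArg ψ hu₁_pow
  rw [map_pow, hψ, smul_pow, hpow, map_one, ← Algebra.algebraMap_eq_smul_one,
    ← map_one (algebraMap ℂ _), (algebraMap ℂ _).injective.eq_iff,
    exp_pi_div_four_mul_I_pow_four] at h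
  norm_num at h

/-- The universal C*-algebra generated by unitaries `u₁, u₂` with
`u₁² u₂ = -u₂ u₁²` is not simple. -/
theorem stmt_7 (A : Type*) [NormedRing A] [StarRing A] [CStarRing A] [CompleteSpace A]
    [NormedAlgebra ℂ A] [StarModule ℂ A]
    (u₁ u₂ : A) (hu₁ : u₁ ∈ unitary A) (hu₂ : u₂ ∈ unitary A)
    (hrel : u₁ ^ 2 * u₂ = -(u₂ * u₁ ^ 2))
    (huniv : ∀ (B : Type*) [NormedRing B] [StarRing B] [CStarRing B] [CompleteSpace B]
      [NormedAlgebra ℂ B] [StarModule ℂ B] (w₁ w₂ : B),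
      w₁ ∈ unitary B → w₂ ∈ unitary B → w₁ ^ 2 * w₂ = -(w₂ * w₁ ^ 2) →
      ∃ φ : A →⋆ₐ[ℂ] B, φ u₁ = w₁ ∧ φ u₂ = w₂) :
    ∃ I : TwoSidedIdeal A, IsClosed (I : Set A) ∧ I ≠ ⊥ ∧ I ≠ ⊤ :=
  stmt_7_general A u₁ u₂ huniv
end

section
/- Let ε ∈ {1, -1} and let A be a unital C*-algebra containing unitaries u and v satisfying u² v = ε i·(v³ u⁷), and suppose A has the universal property for this relation: for every unital C*-algebra B and unitaries w₁, w₂ in B satisfying w₁² w₂ = ε i·(w₂³ w₁⁷), there exists a unital *-homomorphism φ : A → B with φ(u) = w₁ and φ(v) = w₂. Then 1_A ≠ 0_A, i.e. A is not the zero algebra. -/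
/-! The relation `u²v = εi·v³u⁷` has a one-dimensional representation `u ↦ 1`, `v ↦ z` with
`z² = conj(εi)`. Realised in a nonzero C*-algebra of the right universe (`PUnit → ℂ`), the
universal property gives a unital *-homomorphism out of `A` into a nonzero algebra, so `A` is
nonzero as well. -/

theorem Complex.mem_unitary_of_sq_mem_unitary {z : ℂ} (hz : z ^ 2 ∈ unitary ℂ) :
    z ∈ unitary ℂ := by
  have hnorm : ‖z‖ = 1 := by
    have h := CStarRing.norm_of_mem_unitary hz
    rwa [norm_pow, pow_eq_one_iff_of_nonneg (norm_nonneg z) two_ne_zero] at h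
  rw [Unitary.mem_iff_star_mul_self, Complex.star_def, Complex.conj_mul', hnorm]
  norm_num

theorem Complex.exists_mem_unitary_sq_eq {c : ℂ} (hc : c ∈ unitary ℂ) :
    ∃ z ∈ unitary ℂ, z ^ 2 = c := by
  obtain ⟨z, hz⟩ := IsAlgClosed.exists_pow_nat_eq c two_pos
  exact ⟨z, Complex.mem_unitary_of_sq_mem_unitary (hz ▸ hc), hz⟩

theorem one_sq_mul_smul_one_eq_smul {R B : Type*} [CommRing R] [StarRing R] [Ring B]
    [Algebra R B] {c z : R} (hc : c ∈ unitary R) (hz : z ^ 2 = star c) :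
    (1 : B) ^ 2 * (z • 1) = c • ((z • (1 : B)) ^ 3 * 1 ^ 7) := by
  have hcz : c * z ^ 3 = z := by
    rw [pow_succ, hz, ← mul_assoc, Unitary.mul_star_self_of_mem hc, one_mul]
  rw [smul_pow, one_pow, one_pow, one_pow, one_mul, mul_one, smul_smul, hcz]

theorem stmt_11_general (ε : ℂ) (hε : ε = 1 ∨ ε = -1)
    (A : Type*) [NormedRing A] [StarRing A] [CStarRing A] [CompleteSpace A]
    [NormedAlgebra ℂ A] [StarModule ℂ A]
    (u v : A)
    (huniv : ∀ (B : Type*) [NormedRing B] [StarRing B] [CStarRing B] [CompleteSpace B]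
      [NormedAlgebra ℂ B] [StarModule ℂ B] (w₁ w₂ : B),
      w₁ ∈ unitary B → w₂ ∈ unitary B →
      w₁ ^ 2 * w₂ = (ε * Complex.I) • (w₂ ^ 3 * w₁ ^ 7) →
      ∃ φ : A →⋆ₐ[ℂ] B, φ u = w₁ ∧ φ v = w₂) :
    (1 : A) ≠ 0 := by
  have hc : ε * Complex.I ∈ unitary ℂ := by
    rw [Unitary.mem_iff_star_mul_self]
    rcases hε with rfl | rfl <;> simp
  obtain ⟨z, hz, hz2⟩ := Complex.exists_mem_unitary_sq_eq (Unitary.star_mem hc)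
  obtain ⟨φ, -, -⟩ := huniv (PUnit.{_ + 1} → ℂ) 1 (z • 1) (one_mem _)
    (Unitary.smul_mem_of_mem hz (one_mem _)) (one_sq_mul_smul_one_eq_smul hc hz2)
  have : Nontrivial A := (φ : A →+* (PUnit → ℂ)).domain_nontrivial
  exact one_ne_zero

/-- The universal C*-algebra generated by unitaries `u`, `v` with
`u²v = ε i·(v³u⁷)` (with `ε ∈ {1, -1}`) is nonzero. -/
theorem stmt_11 (ε : ℂ) (hε : ε = 1 ∨ ε = -1)
    (A : Type*) [NormedRing A] [StarRing A] [CStarRing A] [CompleteSpace A]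
    [NormedAlgebra ℂ A] [StarModule ℂ A]
    (u v : A) (hu : u ∈ unitary A) (hv : v ∈ unitary A)
    (hrel : u ^ 2 * v = (ε * Complex.I) • (v ^ 3 * u ^ 7))
    (huniv : ∀ (B : Type*) [NormedRing B] [StarRing B] [CStarRing B] [CompleteSpace B]
      [NormedAlgebra ℂ B] [StarModule ℂ B] (w₁ w₂ : B),
      w₁ ∈ unitary B → w₂ ∈ unitary B →
      w₁ ^ 2 * w₂ = (ε * Complex.I) • (w₂ ^ 3 * w₁ ^ 7) →
      ∃ φ : A →⋆ₐ[ℂ] B, φ u = w₁ ∧ φ v = w₂) :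
    (1 : A) ≠ 0 :=
  stmt_11_general ε hε A u v huniv
end

section
/- Let A be a unital C*-algebra containing unitaries u and v satisfying u⁴ v = -(v³ u⁷ v² u⁷), and suppose A has the universal property for this relation: for every unital C*-algebra B and unitaries w₁, w₂ in B satisfying w₁⁴ w₂ = -(w₂³ w₁⁷ w₂² w₁⁷), there exists a unital *-homomorphism φ : A → B with φ(u) = w₁ and φ(v) = w₂. Then A is not simple, i.e. A possesses a closed two-sided ideal different from {0} and from A. -/
/-!
With `u = 1` the defining relation reads `v = -v⁵` in any commutative algebra, so it holds for
`v = ±ζ` where `ζ⁴ = -1`. The universal property therefore yields two distinct characters of `A`.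
The kernel of a character is closed and proper, and it is nonzero because `v - ζ` lies in the
kernel of the first character but not in that of the second.
-/

theorem TwoSidedIdeal.exists_isClosed_ne_bot_ne_top_of_algHom_ne {𝕜 A : Type*} [NormedField 𝕜]
    [NormedRing A] [NormedAlgebra 𝕜 A] [CompleteSpace A] {φ ψ : A →ₐ[𝕜] 𝕜} (hφψ : φ ≠ ψ) :
    ∃ I : TwoSidedIdeal A, IsClosed (I : Set A) ∧ I ≠ ⊥ ∧ I ≠ ⊤ := by
  obtain ⟨a, ha⟩ := DFunLike.ne_iff.mp hφψ
  refine ⟨ker φ, ?_, ?_, ?_⟩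
  · have : (ker φ : Set A) = φ ⁻¹' {0} := Set.ext fun _ ↦ mem_ker φ
    exact this ▸ isClosed_singleton.preimage (map_continuous φ)
  · -- `a` and the scalar `φ a` have the same image under `φ` but not under `ψ`.
    rw [Ne, ker_eq_bot]
    intro hinj
    have := hinj (a₁ := a) (a₂ := algebraMap 𝕜 A (φ a)) (by simp)
    exact ha (by simpa using (congrArg ψ this).symm)
  · intro htop
    have := (mem_ker φ).mp (htop ▸ mem_top (x := (1 : A)))
    simp at this

theorem algebraMap_mem_unitary {R A : Type*} [CommSemiring R] [StarRing R] [Semiring A]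
    [StarRing A] [Algebra R A] [StarModule R A] {z : R} (hz : z ∈ unitary R) :
    algebraMap R A z ∈ unitary A := by
  rw [Unitary.mem_iff, ← algebraMap_star_comm, ← map_mul, ← map_mul,
    Unitary.star_mul_self_of_mem hz, Unitary.mul_star_self_of_mem hz, map_one]
  exact ⟨rfl, rfl⟩

theorem exists_mem_unitary_pow_four_eq_neg_one : ∃ ζ ∈ unitary ℂ, ζ ^ 4 = -1 := by
  obtain ⟨ζ, hζ⟩ := IsAlgClosed.exists_pow_nat_eq (-1 : ℂ) (n := 4) (by norm_num)
  have hnorm : ‖ζ‖ = 1 := by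
    have : ‖ζ‖ ^ 4 = 1 := by rw [← norm_pow, hζ, norm_neg, norm_one]
    exact (pow_eq_one_iff_of_nonneg (norm_nonneg ζ) (by norm_num)).mp this
  refine ⟨ζ, Unitary.mem_iff_star_mul_self.mpr ?_, hζ⟩
  rw [RCLike.star_def, Complex.conj_mul', hnorm]
  simp

theorem one_pow_four_mul_eq_neg_of_pow_four_eq_neg_one {R : Type*} [Ring R] {z : R}
    (hz : z ^ 4 = -1) : (1 : R) ^ 4 * z = -(z ^ 3 * 1 ^ 7 * z ^ 2 * 1 ^ 7) := by
  rw [one_pow, one_pow, one_mul, mul_one, mul_one, ← pow_add, pow_succ, hz, neg_one_mul, neg_neg]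

theorem stmt_13_general (A : Type*) [NormedRing A] [StarRing A] [CompleteSpace A]
    [NormedAlgebra ℂ A]
    (u v : A)
    (huniv : ∀ (B : Type*) [NormedRing B] [StarRing B] [CStarRing B] [CompleteSpace B]
      [NormedAlgebra ℂ B] [StarModule ℂ B] (w₁ w₂ : B),
      w₁ ∈ unitary B → w₂ ∈ unitary B →
      w₁ ^ 4 * w₂ = -(w₂ ^ 3 * w₁ ^ 7 * w₂ ^ 2 * w₁ ^ 7) →
      ∃ φ : A →⋆ₐ[ℂ] B, φ u = w₁ ∧ φ v = w₂) :
    ∃ I : TwoSidedIdeal A, IsClosed (I : Set A) ∧ I ≠ ⊥ ∧ I ≠ ⊤ := by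
  -- `C(PUnit, ℂ)` is a copy of `ℂ` in the universe that `huniv` quantifies over.
  have character (z : ℂ) (hz : z ∈ unitary ℂ) (hz4 : z ^ 4 = -1) : ∃ χ : A →ₐ[ℂ] ℂ, χ v = z := by
    obtain ⟨φ, -, hφv⟩ := huniv C(PUnit, ℂ) 1 (algebraMap ℂ _ z) (one_mem _)
      (algebraMap_mem_unitary hz)
      (one_pow_four_mul_eq_neg_of_pow_four_eq_neg_one (by rw [← map_pow, hz4, map_neg, map_one]))
    exact ⟨(ContinuousMap.evalAlgHom ℂ ℂ PUnit.unit).comp φ.toAlgHom, by simp [hφv]⟩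
  obtain ⟨ζ, hζ, hζ4⟩ := exists_mem_unitary_pow_four_eq_neg_one
  obtain ⟨φ, hφ⟩ := character ζ hζ hζ4
  obtain ⟨ψ, hψ⟩ := character (-ζ) (-(⟨ζ, hζ⟩ : unitary ℂ)).2 (by rwa [Even.neg_pow (by decide)])
  refine TwoSidedIdeal.exists_isClosed_ne_bot_ne_top_of_algHom_ne (φ := φ) (ψ := ψ) fun h ↦ ?_
  have : ζ = -ζ := by rw [← hψ, ← hφ, h]
  have : ζ = 0 := by linear_combination this / 2
  simp [this] at hζ4

/-- The universal C*-algebra generated by unitaries `u`, `v` with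
`u⁴v = -(v³u⁷v²u⁷)` is not simple. -/
theorem stmt_13 (A : Type*) [NormedRing A] [StarRing A] [CStarRing A] [CompleteSpace A]
    [NormedAlgebra ℂ A] [StarModule ℂ A]
    (u v : A) (hu : u ∈ unitary A) (hv : v ∈ unitary A)
    (hrel : u ^ 4 * v = -(v ^ 3 * u ^ 7 * v ^ 2 * u ^ 7))
    (huniv : ∀ (B : Type*) [NormedRing B] [StarRing B] [CStarRing B] [CompleteSpace B]
      [NormedAlgebra ℂ B] [StarModule ℂ B] (w₁ w₂ : B),
      w₁ ∈ unitary B → w₂ ∈ unitary B →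
      w₁ ^ 4 * w₂ = -(w₂ ^ 3 * w₁ ^ 7 * w₂ ^ 2 * w₁ ^ 7) →
      ∃ φ : A →⋆ₐ[ℂ] B, φ u = w₁ ∧ φ v = w₂) :
    ∃ I : TwoSidedIdeal A, IsClosed (I : Set A) ∧ I ≠ ⊥ ∧ I ≠ ⊤ :=
  stmt_13_general A u v huniv
end
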